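/- Let H be an inner product space over the real or complex numbers, let a ∈ H with ‖a‖ = 1, and let M ≥ m > 0. If x, y ∈ H satisfy Re⟨M a − x, x − m a⟩ ≥ 0 and Re⟨M a − y, y − m a⟩ ≥ 0, then 0 ≤ (‖x‖ ‖y‖ − Re⟨x, y⟩) / (‖x‖ + ‖y‖)² ≤ (1/2) ((M − m)/(M + m))². -/

import Mathlib

open RCLike

/-!
Expanding the hypothesis gives `‖x‖² + mM ≤ (M + m) Re⟨x, a⟩`, and by AM-GM
`2√(mM) ‖x‖ ≤ (M + m) Re⟨x, a⟩`; likewise for `y`. Adding the two and using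
`Re⟨x + y, a⟩ ≤ ‖x + y‖` yields `4mM (‖x‖ + ‖y‖)² ≤ (M + m)² ‖x + y‖²`. Since
`2 (‖x‖‖y‖ − Re⟨x, y⟩) = (‖x‖ + ‖y‖)² − ‖x + y‖²` and `(M − m)² = (M + m)² − 4mM`,
this is the claimed upper bound.
-/

open scoped InnerProductSpace

section

variable {𝕜 H : Type*} [RCLike 𝕜] [NormedAddCommGroup H] [InnerProductSpace 𝕜 H]

theorem re_inner_smul_sub_sub_smul (a z : H) (m M : ℝ) :
    re ⟪(M : 𝕜) • a - z, z - (m : 𝕜) • a⟫_𝕜 =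
      (M + m) * re ⟪z, a⟫_𝕜 - m * M * ‖a‖ ^ 2 - ‖z‖ ^ 2 := by
  rw [inner_sub_left, inner_sub_right, inner_sub_right, inner_smul_left, inner_smul_left,
    inner_smul_right, inner_smul_right, conj_ofReal]
  simp only [map_sub, re_ofReal_mul, inner_self_eq_norm_sq, inner_re_symm a z]
  ring

theorem norm_sq_add_mul_le_of_re_inner_nonneg {a z : H} (ha : ‖a‖ = 1) {m M : ℝ}
    (hz : 0 ≤ re ⟪(M : 𝕜) • a - z, z - (m : 𝕜) • a⟫_𝕜) :
    ‖z‖ ^ 2 + m * M ≤ (M + m) * re ⟪z, a⟫_𝕜 := by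
  rw [re_inner_smul_sub_sub_smul, ha] at hz
  linarith

theorem four_mul_mul_sq_le_sq_mul_norm_add_sq {a x y : H} (ha : ‖a‖ = 1) {m M : ℝ}
    (hx : ‖x‖ ^ 2 + m * M ≤ (M + m) * re ⟪x, a⟫_𝕜)
    (hy : ‖y‖ ^ 2 + m * M ≤ (M + m) * re ⟪y, a⟫_𝕜) :
    4 * (m * M) * (‖x‖ + ‖y‖) ^ 2 ≤ (M + m) ^ 2 * ‖x + y‖ ^ 2 := by
  rcases lt_or_ge (m * M) 0 with hneg | hnonneg
  · nlinarith [sq_nonneg (‖x‖ + ‖y‖), sq_nonneg ((M + m) * ‖x + y‖)]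
  set t := √(m * M)
  have ht : t ^ 2 = m * M := Real.sq_sqrt hnonneg
  have am_gm : ∀ z : H, ‖z‖ ^ 2 + m * M ≤ (M + m) * re ⟪z, a⟫_𝕜 →
      2 * t * ‖z‖ ≤ (M + m) * re ⟪z, a⟫_𝕜 := fun z hz ↦ by
    nlinarith [sq_nonneg (‖z‖ - t)]
  have hre : |re ⟪x + y, a⟫_𝕜| ≤ ‖x + y‖ :=
    calc |re ⟪x + y, a⟫_𝕜| ≤ ‖⟪x + y, a⟫_𝕜‖ := abs_re_le_norm _
      _ ≤ ‖x + y‖ * ‖a‖ := norm_inner_le_norm _ _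
      _ = ‖x + y‖ := by rw [ha, mul_one]
  have hsum : 2 * t * (‖x‖ + ‖y‖) ≤ |M + m| * ‖x + y‖ :=
    calc 2 * t * (‖x‖ + ‖y‖) ≤ (M + m) * re ⟪x + y, a⟫_𝕜 := by
          rw [inner_add_left, map_add]
          linarith [am_gm x hx, am_gm y hy]
      _ ≤ |M + m| * |re ⟪x + y, a⟫_𝕜| := by rw [← abs_mul]; exact le_abs_self _
      _ ≤ |M + m| * ‖x + y‖ := by gcongr
  calc 4 * (m * M) * (‖x‖ + ‖y‖) ^ 2 = (2 * t * (‖x‖ + ‖y‖)) ^ 2 := by rw [← ht]; ring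
    _ ≤ (|M + m| * ‖x + y‖) ^ 2 := by gcongr
    _ = (M + m) ^ 2 * ‖x + y‖ ^ 2 := by rw [mul_pow, sq_abs]

theorem norm_mul_norm_sub_re_inner_div_le {x y : H} {m M : ℝ} (hmM : M + m ≠ 0)
    (h : 4 * (m * M) * (‖x‖ + ‖y‖) ^ 2 ≤ (M + m) ^ 2 * ‖x + y‖ ^ 2) :
    (‖x‖ * ‖y‖ - re ⟪x, y⟫_𝕜) / (‖x‖ + ‖y‖) ^ 2 ≤ 1 / 2 * ((M - m) / (M + m)) ^ 2 := by
  rcases (sq_nonneg (‖x‖ + ‖y‖)).eq_or_lt with hs | hs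
  · rw [← hs, div_zero]
    positivity
  have hgap : 2 * (‖x‖ * ‖y‖ - re ⟪x, y⟫_𝕜) = (‖x‖ + ‖y‖) ^ 2 - ‖x + y‖ ^ 2 := by
    rw [norm_add_sq (𝕜 := 𝕜)]
    ring
  rw [div_pow, ← mul_div_assoc, div_le_div_iff₀ hs (by positivity)]
  linear_combination (1 / 2) * ((M + m) ^ 2 * hgap + h)

end

theorem reverse_schwarz_mM {𝕜 H : Type*} [RCLike 𝕜] [NormedAddCommGroup H]
    [InnerProductSpace 𝕜 H] (a : H) (ha : ‖a‖ = 1) (m M : ℝ)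
    (hm : 0 < m) (hmM : m ≤ M) (x y : H)
    (hx : 0 ≤ re (inner 𝕜 ((M : 𝕜) • a - x) (x - (m : 𝕜) • a) : 𝕜))
    (hy : 0 ≤ re (inner 𝕜 ((M : 𝕜) • a - y) (y - (m : 𝕜) • a) : 𝕜)) :
    0 ≤ (‖x‖ * ‖y‖ - re (inner 𝕜 x y : 𝕜)) / (‖x‖ + ‖y‖) ^ 2 ∧
      (‖x‖ * ‖y‖ - re (inner 𝕜 x y : 𝕜)) / (‖x‖ + ‖y‖) ^ 2 ≤
        (1 / 2) * ((M - m) / (M + m)) ^ 2 := by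
  refine ⟨div_nonneg (sub_nonneg.2 (re_inner_le_norm x y)) (sq_nonneg _), ?_⟩
  have hsum_ne : M + m ≠ 0 := (by linarith : 0 < M + m).ne'
  exact norm_mul_norm_sub_re_inner_div_le hsum_ne <| four_mul_mul_sq_le_sq_mul_norm_add_sq ha
    (norm_sq_add_mul_le_of_re_inner_nonneg ha hx) (norm_sq_add_mul_le_of_re_inner_nonneg ha hy)
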